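/- arXiv:1710.01612 — 3 statements merged into one kernel-verified Lean document; each statement's English description precedes it below -/
import Mathlib

section
/- If g(·+a) ∈ L¹(γ) and g(·+b) ∈ L¹(γ) for real numbers a < b, then g(·+x) ∈ L¹(γ) for every x with a < x < b. -/
open MeasureTheory Real

noncomputable def stdPhi (x : ℝ) : ℝ := (Real.sqrt (2 * Real.pi))⁻¹ * Real.exp (-x ^ 2 / 2)

/- Since `φ(z - x) / φ(z - c) = exp((c² - x²)/2) · exp(z (x - c))`, for `a ≤ x ≤ b` the density
`φ(· - x)` is at most a constant times `φ(· - a)` on `z ≤ 0` and a constant times `φ(· - b)` on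
`z ≥ 0`. Integrating `|g|` against this bound, after translating each `g(· + c) φ` to
`g · φ(· - c)`, gives integrability of `g(· + x) φ`. -/

lemma stdPhi_pos (x : ℝ) : 0 < stdPhi x := by
  unfold stdPhi
  positivity

lemma continuous_stdPhi : Continuous stdPhi := by
  unfold stdPhi
  fun_prop

lemma stdPhi_sub_eq (c x z : ℝ) :
    stdPhi (z - x) = exp ((c ^ 2 - x ^ 2) / 2 + z * (x - c)) * stdPhi (z - c) := by
  unfold stdPhi
  rw [mul_left_comm, ← exp_add]
  ring_nf

lemma stdPhi_sub_le_of_mul_nonpos {c x z : ℝ} (h : z * (x - c) ≤ 0) :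
    stdPhi (z - x) ≤ exp ((c ^ 2 - x ^ 2) / 2) * stdPhi (z - c) := by
  rw [stdPhi_sub_eq c]
  exact mul_le_mul_of_nonneg_right (exp_le_exp.2 (by linarith)) (stdPhi_pos _).le

lemma stdPhi_sub_le_add {a b x : ℝ} (hax : a ≤ x) (hxb : x ≤ b) (z : ℝ) :
    stdPhi (z - x) ≤
      exp ((a ^ 2 - x ^ 2) / 2) * stdPhi (z - a) + exp ((b ^ 2 - x ^ 2) / 2) * stdPhi (z - b) := by
  rcases le_total z 0 with hz | hz
  · exact (stdPhi_sub_le_of_mul_nonpos (by nlinarith)).trans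
      (le_add_of_nonneg_right (mul_nonneg (exp_pos _).le (stdPhi_pos _).le))
  · exact (stdPhi_sub_le_of_mul_nonpos (by nlinarith)).trans
      (le_add_of_nonneg_left (mul_nonneg (exp_pos _).le (stdPhi_pos _).le))

lemma MeasureTheory.Integrable.mul_of_abs_le_add {α : Type*} [MeasurableSpace α] {μ : Measure α}
    {f u v w : α → ℝ} {A B : ℝ} (hu : Integrable (fun z => f z * u z) μ)
    (hv : Integrable (fun z => f z * v z) μ) (hw : AEStronglyMeasurable (fun z => f z * w z) μ)
    (hle : ∀ z, |w z| ≤ A * |u z| + B * |v z|) : Integrable (fun z => f z * w z) μ := by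
  refine (hu.norm.const_mul A).add (hv.norm.const_mul B) |>.mono' hw (ae_of_all _ fun z => ?_)
  simp only [Pi.add_apply, norm_mul, norm_eq_abs]
  have := mul_le_mul_of_nonneg_left (hle z) (abs_nonneg (f z))
  linarith

lemma integrable_mul_stdPhi_sub_iff (g : ℝ → ℝ) (c : ℝ) :
    Integrable (fun z => g (z + c) * stdPhi z) ↔ Integrable (fun w => g w * stdPhi (w - c)) :=
  ⟨fun h => by simpa using h.comp_sub_right c, fun h => by simpa using h.comp_add_right c⟩

theorem shift_integrable_between_general
    (g : ℝ → ℝ) (a b : ℝ)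
    (ha : Integrable (fun z => g (z + a) * stdPhi z))
    (hb : Integrable (fun z => g (z + b) * stdPhi z)) :
    ∀ x : ℝ, a < x → x < b → Integrable (fun z => g (z + x) * stdPhi z) := by
  intro x hax hxb
  rw [integrable_mul_stdPhi_sub_iff] at ha hb ⊢
  have hmeas : AEStronglyMeasurable (fun w => g w * stdPhi (w - x)) := by
    have hratio : Continuous fun w => stdPhi (w - x) / stdPhi (w - a) :=
      (continuous_stdPhi.comp (continuous_sub_right x)).div
        (continuous_stdPhi.comp (continuous_sub_right a)) fun w => (stdPhi_pos _).ne'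
    refine (ha.aestronglyMeasurable.mul hratio.aestronglyMeasurable).congr (ae_of_all _ fun w => ?_)
    simp only [Pi.mul_apply]
    field_simp [(stdPhi_pos (w - a)).ne']
  exact ha.mul_of_abs_le_add hb hmeas fun w => by
    simpa only [abs_of_pos (stdPhi_pos _)] using stdPhi_sub_le_add hax.le hxb.le w

/-- If `g(·+a), g(·+b) ∈ L¹(γ)` with `a < b`, then `g(·+x) ∈ L¹(γ)` for `a < x < b`. -/
theorem shift_integrable_between
    (g : ℝ → ℝ) (hmeas : Measurable g) (a b : ℝ) (hab : a < b)
    (ha : Integrable (fun z => g (z + a) * stdPhi z))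
    (hb : Integrable (fun z => g (z + b) * stdPhi z)) :
    ∀ x : ℝ, a < x → x < b → Integrable (fun z => g (z + x) * stdPhi z) :=
  shift_integrable_between_general g a b ha hb
end

section
/- Instability of Hermite rank under scaling: suppose G: ℝ → ℝ is measurable, not a.e. symmetric (i.e., z ↦ G(z) − G(−z) is not a.e. zero), and G(·×M) ∈ L²(γ) for some M > 1. Then the set E = {y ∈ (0,M) : E[G(yZ)·Z] = 0} has no accumulation point inside (0,M). -/
/-!
Rescaling `z = t / y` turns `E[G(yZ) Z]` into a positive multiple of the Gaussian transform
`L(s) = ∫ G(t) t exp(-s t²) dt` at `s = 1 / (2y²)`, and the `L²(γ)` hypothesis at scale `M` makes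
`L` holomorphic on the half-plane `Re s > 1 / (2M²)`. An accumulation point of zero scales in
`(0, M)` is an accumulation point of zeros of `L` inside that half-plane, so `L` vanishes there by
the identity theorem. Folding `ℝ` onto `(0, ∞)`, the integrals of `(G(t) - G(-t)) t exp(-s t²)`
over `t > 0` then vanish for all large `s`; by Weierstrass approximation in the variable
`exp(-t²)`, the function `(G(t) - G(-t)) t` is orthogonal to every test function supported in
`(0, ∞)`, hence vanishes a.e., and `G` is a.e. symmetric.
-/

open MeasureTheory Real Filter

open Set Topology

lemma stdPhi_div (t y : ℝ) : stdPhi (t / y) = (√(2 * π))⁻¹ * rexp (-(2 * y ^ 2)⁻¹ * t ^ 2) := by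
  rw [stdPhi, div_pow]
  ring_nf

lemma integral_comp_mul_mul_stdPhi (G : ℝ → ℝ) {y : ℝ} (hy : 0 < y) :
    ∫ z, G (y * z) * z * stdPhi z =
      (√(2 * π) * y ^ 2)⁻¹ * ∫ t, G t * t * rexp (-(2 * y ^ 2)⁻¹ * t ^ 2) := by
  calc ∫ z, G (y * z) * z * stdPhi z
      = ∫ z, (fun t => G t * (t / y) * stdPhi (t / y)) (y * z) := by
        simp only [mul_div_cancel_left₀ _ hy.ne']
    _ = y⁻¹ * ∫ t, G t * (t / y) * stdPhi (t / y) := by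
        rw [Measure.integral_comp_mul_left (fun t => G t * (t / y) * stdPhi (t / y)),
          abs_of_pos (inv_pos.2 hy), smul_eq_mul]
    _ = _ := by
        simp_rw [stdPhi_div, ← integral_const_mul]
        congr 1 with t
        field_simp

lemma integrable_sq_mul_exp_of_integrable_comp_mul {G : ℝ → ℝ} {M : ℝ} (hM : M ≠ 0)
    (hG : Integrable (fun z => G (M * z) ^ 2 * stdPhi z)) :
    Integrable (fun t => G t ^ 2 * rexp (-(2 * M ^ 2)⁻¹ * t ^ 2)) := by
  refine (integrable_comp_mul_left_iff (fun t => G t ^ 2 * rexp (-(2 * M ^ 2)⁻¹ * t ^ 2)) hM).1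
    ((hG.const_mul √(2 * π)).congr (ae_of_all _ fun z => ?_))
  have hz : stdPhi z = stdPhi (M * z / M) := by rw [mul_div_cancel_left₀ z hM]
  simp only [hz, stdPhi_div]
  field_simp

lemma integrable_sq_mul_exp_neg_mul_sq {c : ℝ} (hc : 0 < c) :
    Integrable (fun t : ℝ => t ^ 2 * rexp (-c * t ^ 2)) := by
  simpa [Real.rpow_two] using integrable_rpow_mul_exp_neg_mul_sq hc (s := 2) (by norm_num)

lemma integrable_mul_mul_exp_neg_mul_sq {G : ℝ → ℝ} (hG : AEStronglyMeasurable G) {b r : ℝ}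
    (hb : 0 ≤ b) (hr : b < r) (hG2 : Integrable (fun t => G t ^ 2 * rexp (-b * t ^ 2))) :
    Integrable (fun t => G t * t * rexp (-r * t ^ 2)) := by
  -- Cauchy–Schwarz, splitting the weight as `exp (-(b/2) t²) * exp (-(r - b/2) t²)`.
  have hexp_sq : ∀ c t : ℝ, rexp (-c * t ^ 2) ^ 2 = rexp (-(2 * c) * t ^ 2) := fun c t => by
    rw [← Real.exp_nat_mul]; ring_nf
  have hG' : MemLp (fun t => G t * rexp (-(b / 2) * t ^ 2)) 2 := by
    refine (memLp_two_iff_integrable_sq (by fun_prop)).2 (hG2.congr (ae_of_all _ fun t => ?_))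
    simp only [mul_pow, hexp_sq]; ring_nf
  have hid : MemLp (fun t : ℝ => t * rexp (-(r - b / 2) * t ^ 2)) 2 := by
    refine (memLp_two_iff_integrable_sq (by fun_prop)).2 ((integrable_sq_mul_exp_neg_mul_sq
      (c := 2 * (r - b / 2)) (by linarith)).congr (ae_of_all _ fun t => ?_))
    simp only [mul_pow, hexp_sq]
  refine (hG'.integrable_mul hid).congr (ae_of_all _ fun t => ?_)
  simp only [Pi.mul_apply]
  rw [mul_mul_mul_comm, ← Real.exp_add]; ring_nf

theorem AccPt.image_of_injOn {X Y : Type*} [TopologicalSpace X] [TopologicalSpace Y]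
    {f : X → Y} {x : X} {S U : Set X} {T : Set Y} (h : AccPt x (𝓟 S)) (hf : ContinuousAt f x)
    (hU : U ∈ 𝓝 x) (hinj : InjOn f U) (hST : MapsTo f S T) : AccPt (f x) (𝓟 T) := by
  rw [accPt_iff_frequently_nhdsNE] at h ⊢
  have hne : ∀ᶠ y in 𝓝[≠] x, f y ∈ ({f x}ᶜ : Set Y) := by
    filter_upwards [nhdsWithin_le_nhds hU, self_mem_nhdsWithin] with y hyU hyx
    exact fun hfy => hyx (hinj hyU (mem_of_mem_nhds hU) hfy)
  exact (tendsto_nhdsWithin_of_tendsto_nhds_of_eventually_within f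
    (hf.tendsto.mono_left nhdsWithin_le_nhds) hne).frequently (h.mono fun y hy => hST hy)

section LaplaceTransform

lemma norm_cexp_neg_mul_ofReal (s : ℂ) (x : ℝ) : ‖Complex.exp (-s * x)‖ = rexp (-s.re * x) := by
  simp [Complex.norm_exp, Complex.mul_re]

lemma mul_exp_neg_mul_le_exp_neg_mul_div {δ : ℝ} (hδ : 0 < δ) (r x : ℝ) :
    x * rexp (-(r + δ) * x) ≤ rexp (-r * x) / δ := by
  rw [le_div_iff₀ hδ]
  calc x * rexp (-(r + δ) * x) * δ ≤ rexp (δ * x) * rexp (-(r + δ) * x) := by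
        rw [mul_right_comm, mul_comm x δ]
        exact mul_le_mul_of_nonneg_right (by linarith [Real.add_one_le_exp (δ * x)])
          (Real.exp_pos _).le
    _ = rexp (-r * x) := by rw [← Real.exp_add]; ring_nf

variable {α : Type*} [MeasurableSpace α] {μ : Measure α}

theorem differentiableOn_integral_mul_cexp_neg_mul {f : α → ℂ} {g : α → ℝ}
    (hf : AEStronglyMeasurable f μ) (hg : AEMeasurable g μ) (hg0 : ∀ a, 0 ≤ g a) {b : ℝ}
    (hint : ∀ r, b < r → Integrable (fun a => ‖f a‖ * rexp (-r * g a)) μ) :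
    DifferentiableOn ℂ (fun s : ℂ => ∫ a, f a * Complex.exp (-s * g a) ∂μ) {s | b < s.re} := by
  intro s (hs : b < s.re)
  set δ := (s.re - b) / 3 with hδ_def
  have hδ : 0 < δ := by positivity
  have hball : ∀ x ∈ Metric.ball s δ, b + 2 * δ ≤ x.re := fun x hx => by
    have := (Complex.abs_re_le_norm (x - s)).trans (mem_ball_iff_norm.1 hx).le
    rw [Complex.sub_re, abs_le] at this
    linarith [this.1]
  have hmeas : ∀ x : ℂ, AEStronglyMeasurable (fun a => f a * Complex.exp (-x * g a)) μ :=
    fun x => hf.mul (by fun_prop)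
  have hF_int : Integrable (fun a => f a * Complex.exp (-s * g a)) μ :=
    (hint s.re hs).mono' (hmeas s) (ae_of_all _ fun a => by
      rw [norm_mul, norm_cexp_neg_mul_ofReal])
  -- Giving up `δ` in the exponent absorbs the factor `g a` produced by differentiation.
  have hbound : ∀ᵐ a ∂μ, ∀ x ∈ Metric.ball s δ,
      ‖f a * (Complex.exp (-x * g a) * -g a)‖ ≤ ‖f a‖ * rexp (-(b + δ) * g a) / δ :=
    ae_of_all _ fun a x hx => by
      rw [norm_mul, norm_mul, norm_cexp_neg_mul_ofReal, norm_neg, Complex.norm_real,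
        Real.norm_of_nonneg (hg0 a), mul_div_assoc]
      gcongr
      calc rexp (-x.re * g a) * g a ≤ g a * rexp (-(b + δ + δ) * g a) := by
            rw [mul_comm]
            exact mul_le_mul_of_nonneg_left
              (Real.exp_le_exp.2 (by nlinarith [hball x hx, hg0 a])) (hg0 a)
        _ ≤ _ := mul_exp_neg_mul_le_exp_neg_mul_div hδ _ _
  have hderiv : ∀ᵐ a ∂μ, ∀ x ∈ Metric.ball s δ, HasDerivAt
      (fun x : ℂ => f a * Complex.exp (-x * g a)) (f a * (Complex.exp (-x * g a) * -g a)) x :=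
    ae_of_all _ fun a x _ => by
      simpa using (((hasDerivAt_id x).neg.mul_const (g a : ℂ)).cexp).const_mul (f a)
  exact (hasDerivAt_integral_of_dominated_loc_of_deriv_le (Metric.ball_mem_nhds s hδ)
    (Eventually.of_forall hmeas) hF_int (by fun_prop) hbound
    ((hint _ (by linarith)).div_const δ) hderiv).2.differentiableAt.differentiableWithinAt

theorem integral_mul_exp_neg_mul_eq_zero_of_accPt {f g : α → ℝ} (hf : AEStronglyMeasurable f μ)
    (hg : AEMeasurable g μ) (hg0 : ∀ a, 0 ≤ g a) {b σ : ℝ}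
    (hint : ∀ r, b < r → Integrable (fun a => f a * rexp (-r * g a)) μ) (hσ : b < σ)
    (hacc : AccPt σ (𝓟 {s | ∫ a, f a * rexp (-s * g a) ∂μ = 0})) {s : ℝ} (hs : b < s) :
    ∫ a, f a * rexp (-s * g a) ∂μ = 0 := by
  set L : ℂ → ℂ := fun z => ∫ a, (f a : ℂ) * Complex.exp (-z * g a) ∂μ
  have hL : ∀ s : ℝ, L s = ↑(∫ a, f a * rexp (-s * g a) ∂μ) := fun s => by
    rw [← integral_complex_ofReal]
    push_cast
    rfl
  have hU : IsOpen {z : ℂ | b < z.re} := isOpen_lt continuous_const Complex.continuous_re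
  have hLan : AnalyticOnNhd ℂ L {z : ℂ | b < z.re} :=
    (differentiableOn_integral_mul_cexp_neg_mul (by fun_prop) hg hg0 fun r hr =>
      (hint r hr).norm.congr (ae_of_all _ fun a => by
        simp [abs_of_pos (Real.exp_pos _)])).analyticOnNhd hU
  have hfreq : ∃ᶠ z in 𝓝[≠] (σ : ℂ), L z = 0 := by
    have := hacc.map Complex.continuous_ofReal.continuousAt Complex.ofReal_injective
    rw [map_principal, accPt_iff_frequently_nhdsNE] at this
    exact this.mono fun z ⟨t, ht, htz⟩ => by rw [← htz, hL, ht, Complex.ofReal_zero]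
  have hLs : L s = 0 := hLan.eqOn_zero_of_preconnected_of_frequently_eq_zero
    (convex_halfSpace_re_gt b).isPreconnected hσ hfreq (show b < (s : ℂ).re from hs)
  exact_mod_cast (hL s).symm.trans hLs

end LaplaceTransform

section Moments

variable {α : Type*} [MeasurableSpace α] {μ : Measure α} {f u : α → ℝ}

lemma integrable_mul_comp_of_mem_Icc (hf : Integrable f μ) (hu : AEMeasurable u μ)
    (hu01 : ∀ a, u a ∈ Icc (0 : ℝ) 1) {g : ℝ → ℝ} (hg : Continuous g) :
    Integrable (fun a => f a * g (u a)) μ := by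
  obtain ⟨C, hC⟩ := isCompact_Icc.exists_bound_of_continuousOn hg.continuousOn
  exact hf.mul_bdd (hg.measurable.comp_aemeasurable hu).aestronglyMeasurable
    (ae_of_all _ fun a => hC _ (hu01 a))

lemma integral_mul_eval_eq_zero_of_moments (hf : Integrable f μ) (hu : AEMeasurable u μ)
    (hu01 : ∀ a, u a ∈ Icc (0 : ℝ) 1) (hmom : ∀ n : ℕ, ∫ a, f a * u a ^ n ∂μ = 0)
    (p : Polynomial ℝ) : ∫ a, f a * p.eval (u a) ∂μ = 0 := by
  simp_rw [Polynomial.eval_eq_sum_range, Finset.mul_sum]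
  rw [integral_finsetSum _ fun i _ =>
    integrable_mul_comp_of_mem_Icc hf hu hu01 (g := fun x => p.coeff i * x ^ i) (by fun_prop)]
  refine Finset.sum_eq_zero fun i _ => ?_
  simp_rw [mul_left_comm (f _), integral_const_mul, hmom, mul_zero]

theorem integral_mul_comp_eq_zero_of_moments (hf : Integrable f μ) (hu : AEMeasurable u μ)
    (hu01 : ∀ a, u a ∈ Icc (0 : ℝ) 1) (hmom : ∀ n : ℕ, ∫ a, f a * u a ^ n ∂μ = 0)
    {g : ℝ → ℝ} (hg : Continuous g) : ∫ a, f a * g (u a) ∂μ = 0 := by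
  set C := ∫ a, |f a| ∂μ
  refine abs_nonpos_iff.1 (le_of_forall_pos_le_add fun ε hε => ?_)
  obtain ⟨p, hp⟩ := exists_polynomial_near_of_continuousOn 0 1 g hg.continuousOn
    (ε / (C + 1)) (by positivity)
  have hpg : ∫ a, f a * g (u a) ∂μ = ∫ a, f a * (g (u a) - p.eval (u a)) ∂μ := by
    simp_rw [mul_sub]
    rw [integral_sub (integrable_mul_comp_of_mem_Icc hf hu hu01 hg)
      (integrable_mul_comp_of_mem_Icc hf hu hu01 p.continuous),
      integral_mul_eval_eq_zero_of_moments hf hu hu01 hmom, sub_zero]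
  calc |∫ a, f a * g (u a) ∂μ| ≤ ∫ a, ε / (C + 1) * |f a| ∂μ := by
        rw [hpg, ← Real.norm_eq_abs]
        refine norm_integral_le_of_norm_le (hf.abs.const_mul _) (ae_of_all _ fun a => ?_)
        rw [norm_mul, Real.norm_eq_abs, Real.norm_eq_abs, abs_sub_comm, mul_comm]
        gcongr
        exact (hp _ (hu01 a)).le
    _ = ε * (C / (C + 1)) := by rw [integral_const_mul]; ring
    _ ≤ 0 + ε := by
        have hC : 0 ≤ C := integral_nonneg fun a => abs_nonneg _
        rw [zero_add]
        exact mul_le_of_le_one_right hε.le ((div_le_one (by positivity)).2 (by linarith))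

end Moments

lemma continuous_comp_sqrt_neg_log {ψ : ℝ → ℝ} (hψ : Continuous ψ) (hsupp : HasCompactSupport ψ)
    (hψ0 : ψ 0 = 0) : Continuous fun v => ψ √(-Real.log v) := by
  refine continuous_iff_continuousAt.2 fun v => ?_
  rcases eq_or_ne v 0 with rfl | hv
  · rw [← continuousWithinAt_compl_self, ContinuousWithinAt, Real.log_zero, neg_zero,
      Real.sqrt_zero, hψ0]
    exact (hsupp.is_zero_at_infty.mono_left atTop_le_cocompact).comp
      (Real.tendsto_sqrt_atTop.comp (tendsto_neg_atBot_atTop.comp Real.tendsto_log_nhdsNE_zero))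
  · exact hψ.continuousAt.comp
      (Real.continuous_sqrt.continuousAt.comp (Real.continuousAt_log hv).neg)

theorem ae_eq_zero_of_integral_Ioi_mul_exp_neg_mul_sq_eq_zero {F : ℝ → ℝ} {b : ℝ}
    (hint : IntegrableOn (fun t => F t * rexp (-b * t ^ 2)) (Ioi 0))
    (hzero : ∀ n : ℕ, ∫ t in Ioi 0, F t * rexp (-(b + n) * t ^ 2) = 0) :
    ∀ᵐ t, 0 < t → F t = 0 := by
  have hmom : ∀ n : ℕ, ∫ t in Ioi 0, F t * rexp (-b * t ^ 2) * rexp (-t ^ 2) ^ n = 0 :=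
    fun n => by
      refine (setIntegral_congr_fun measurableSet_Ioi fun t _ => ?_).trans (hzero n)
      rw [← Real.exp_nat_mul, mul_assoc, ← Real.exp_add]
      ring_nf
  have hu01 : ∀ t : ℝ, rexp (-t ^ 2) ∈ Icc (0 : ℝ) 1 :=
    fun t => ⟨(exp_pos _).le, exp_le_one_iff.2 (by nlinarith)⟩
  have hf0 : ∀ᵐ t, t ∈ Ioi 0 → F t * rexp (-b * t ^ 2) = 0 := by
    refine isOpen_Ioi.ae_eq_zero_of_integral_contDiff_smul_eq_zero hint.locallyIntegrableOn
      fun ψ hψ hsupp hsub => ?_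
    have hψ0 : ∀ t ∉ Ioi 0, ψ t = 0 := fun t ht =>
      image_eq_zero_of_notMem_tsupport fun h => ht (hsub h)
    calc ∫ t, ψ t • (F t * rexp (-b * t ^ 2))
        = ∫ t in Ioi 0, ψ t • (F t * rexp (-b * t ^ 2)) :=
          (setIntegral_eq_integral_of_forall_compl_eq_zero fun t ht => by
            rw [hψ0 t ht, zero_smul]).symm
      -- on `t > 0`, `ψ t = g (exp (-t²))` with `g v = ψ √(-log v)` continuous
      _ = ∫ t in Ioi 0, F t * rexp (-b * t ^ 2) * ψ √(-Real.log (rexp (-t ^ 2))) :=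
          setIntegral_congr_fun measurableSet_Ioi fun t (ht : 0 < t) => by
            rw [Real.log_exp, neg_neg, Real.sqrt_sq ht.le, smul_eq_mul, mul_comm]
      _ = 0 := integral_mul_comp_eq_zero_of_moments hint (by fun_prop) hu01 hmom
          (continuous_comp_sqrt_neg_log hψ.continuous hsupp (hψ0 0 (lt_irrefl (0 : ℝ))))
  filter_upwards [hf0] with t ht htpos
  exact (mul_eq_zero.1 (ht htpos)).resolve_right (exp_pos _).ne'

lemma integral_eq_integral_Ioi_add_comp_neg {E : Type*} [NormedAddCommGroup E] [NormedSpace ℝ E]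
    {f : ℝ → E} (hf : Integrable f) : ∫ x, f x = ∫ x in Ioi 0, (f x + f (-x)) := by
  rw [integral_add hf.integrableOn hf.comp_neg.integrableOn, integral_comp_neg_Ioi, neg_zero,
    add_comm, intervalIntegral.integral_Iic_add_Ioi hf.integrableOn hf.integrableOn]

lemma ae_eq_zero_of_odd_of_ae_pos {H : ℝ → ℝ} (hodd : ∀ t, H (-t) = -H t)
    (h : ∀ᵐ t, 0 < t → H t = 0) : ∀ᵐ t, H t = 0 := by
  have h' : ∀ᵐ t, 0 < -t → H (-t) = 0 :=
    (Measure.measurePreserving_neg volume).quasiMeasurePreserving.ae h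
  filter_upwards [h, h'] with t hpos hneg
  rcases lt_trichotomy t 0 with ht | rfl | ht
  · simpa [hodd] using hneg (neg_pos.2 ht)
  · have h0 := hodd 0
    rw [neg_zero] at h0
    linarith
  · exact hpos ht

lemma mapsTo_inv_two_mul_sq {G : ℝ → ℝ} {M : ℝ} :
    MapsTo (fun y : ℝ => (2 * y ^ 2)⁻¹)
      {y | y ∈ Ioo 0 M ∧ ∫ z, G (y * z) * z * stdPhi z = 0}
      {s | ∫ t, G t * t * rexp (-s * t ^ 2) = 0} := by
  rintro y ⟨hy, hzero⟩
  rw [integral_comp_mul_mul_stdPhi G hy.1] at hzero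
  exact (mul_eq_zero.1 hzero).resolve_left (by have := hy.1; positivity)

lemma injOn_inv_two_mul_sq : InjOn (fun y : ℝ => (2 * y ^ 2)⁻¹) (Ioi 0) :=
  fun x (hx : 0 < x) y (hy : 0 < y) hxy =>
    (pow_left_inj₀ hx.le hy.le two_ne_zero).1 (by simpa using hxy)

theorem hermite_rank_scale_instability_general
    (G : ℝ → ℝ) (hmeas : Measurable G)
    (hnotsym : ¬ ∀ᵐ z : ℝ, G z - G (-z) = 0)
    (M : ℝ)
    (hL2 : Integrable (fun z => (G (M * z)) ^ 2 * stdPhi z)) :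
    ∀ y ∈ Set.Ioo (0 : ℝ) M,
      ¬ AccPt y (𝓟 {y' : ℝ | y' ∈ Set.Ioo (0 : ℝ) M ∧
          ∫ z : ℝ, G (y' * z) * z * stdPhi z = 0}) := by
  rintro y₀ ⟨hy₀, hy₀M⟩ hacc
  set b := (2 * M ^ 2)⁻¹
  have hint : ∀ r, b < r → Integrable (fun t => G t * t * rexp (-r * t ^ 2)) := fun r hr =>
    integrable_mul_mul_exp_neg_mul_sq hmeas.aestronglyMeasurable (by positivity) hr
      (integrable_sq_mul_exp_of_integrable_comp_mul (hy₀.trans hy₀M).ne' hL2)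
  have hb : b < (2 * y₀ ^ 2)⁻¹ := by simp only [b]; gcongr
  have hacc' := hacc.image_of_injOn (by fun_prop (disch := positivity)) (Ioi_mem_nhds hy₀)
    injOn_inv_two_mul_sq mapsTo_inv_two_mul_sq
  have hfold : ∀ s, b < s → Integrable (fun t => (G t - G (-t)) * t * rexp (-s * t ^ 2)) ∧
      ∫ t in Ioi 0, (G t - G (-t)) * t * rexp (-s * t ^ 2) = 0 := fun s hs => by
    have heq : (fun t => (G t - G (-t)) * t * rexp (-s * t ^ 2)) =
        fun t => G t * t * rexp (-s * t ^ 2) + G (-t) * -t * rexp (-s * (-t) ^ 2) :=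
      funext fun t => by rw [neg_sq]; ring
    rw [heq, ← integral_eq_integral_Ioi_add_comp_neg (hint s hs)]
    exact ⟨(hint s hs).add (hint s hs).comp_neg, integral_mul_exp_neg_mul_eq_zero_of_accPt
      (by fun_prop) (by fun_prop) sq_nonneg hint hb hacc' hs⟩
  have hpos : ∀ᵐ t, 0 < t → (G t - G (-t)) * t = 0 :=
    ae_eq_zero_of_integral_Ioi_mul_exp_neg_mul_sq_eq_zero (b := b + 1)
      (hfold _ (by linarith)).1.integrableOn
      fun n => (hfold _ (by linarith [(n.cast_nonneg : (0 : ℝ) ≤ n)])).2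
  exact hnotsym (ae_eq_zero_of_odd_of_ae_pos (fun t => by simp)
    (hpos.mono fun t ht htpos => (mul_eq_zero.1 (ht htpos)).resolve_right htpos.ne'))

/-- Instability of the Hermite rank under scaling: if `G` is measurable, not a.e.
symmetric, and `G(·×M) ∈ L²(γ)` for some `M > 1`, then the set of scales
`y ∈ (0,M)` where `E[G(yZ)Z]` vanishes has no accumulation point in `(0,M)`. -/
theorem hermite_rank_scale_instability
    (G : ℝ → ℝ) (hmeas : Measurable G)
    (hnotsym : ¬ ∀ᵐ z : ℝ, G z - G (-z) = 0)
    (M : ℝ) (hM : 1 < M)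
    (hL2 : Integrable (fun z => (G (M * z)) ^ 2 * stdPhi z)) :
    ∀ y ∈ Set.Ioo (0 : ℝ) M,
      ¬ AccPt y (𝓟 {y' : ℝ | y' ∈ Set.Ioo (0 : ℝ) M ∧
          ∫ z : ℝ, G (y' * z) * z * stdPhi z = 0}) :=
  hermite_rank_scale_instability_general G hmeas hnotsym M hL2
end

section
/- Coincidence of power rank and Hermite rank: for G ∈ L²(γ) with Hermite rank k (the smallest m ≥ 1 with E[G(Z)H_m(Z)] ≠ 0), the function G_∞(x) = E[G(Z+x)] is smooth and its power rank, i.e., the smallest m ≥ 1 with G_∞^{(m)}(0) ≠ 0, equals k. -/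
open MeasureTheory Real


noncomputable def hermiteEval (m : ℕ) (z : ℝ) : ℝ :=
  Polynomial.aeval z (Polynomial.hermite m)

noncomputable def psiH (m : ℕ) (x : ℝ) : ℝ := hermiteEval m x * stdPhi x

lemma continuous_hermiteEval (m : ℕ) : Continuous (hermiteEval m) :=
  (Polynomial.hermite m).continuous_aeval

lemma continuous_psiH (m : ℕ) : Continuous (psiH m) :=
  (continuous_hermiteEval m).mul continuous_stdPhi

lemma hasDerivAt_stdPhi (x : ℝ) : HasDerivAt stdPhi (-x * stdPhi x) x := by
  have h1 : HasDerivAt (fun x : ℝ => -x ^ 2 / 2) (-x) x := by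
    have := ((hasDerivAt_pow 2 x).neg).div_const 2
    simpa using this.congr_deriv (by ring)
  have h2 := (h1.exp).const_mul ((Real.sqrt (2 * Real.pi))⁻¹)
  unfold stdPhi
  refine h2.congr_deriv ?_
  ring

lemma hermiteEval_succ (m : ℕ) (x : ℝ) :
    hermiteEval (m + 1) x
      = x * hermiteEval m x - Polynomial.aeval x (Polynomial.derivative (Polynomial.hermite m)) := by
  unfold hermiteEval
  rw [Polynomial.hermite_succ]
  simp

lemma hasDerivAt_psiH (m : ℕ) (x : ℝ) : HasDerivAt (psiH m) (-psiH (m + 1) x) x := by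
  have h1 : HasDerivAt (fun x : ℝ => hermiteEval m x)
      (Polynomial.aeval x (Polynomial.derivative (Polynomial.hermite m))) x :=
    (Polynomial.hermite m).hasDerivAt_aeval x
  have h2 := h1.mul (hasDerivAt_stdPhi x)
  unfold psiH
  refine h2.congr_deriv ?_
  rw [hermiteEval_succ]
  ring

lemma hermiteEval_bound (m : ℕ) : ∃ C : ℝ, 0 ≤ C ∧ ∀ x : ℝ, |hermiteEval m x| ≤ C * (1 + |x|) ^ m := by
  refine ⟨∑ i ∈ Finset.range (m + 1), |((Polynomial.hermite m).coeff i : ℝ)|, by positivity, fun x => ?_⟩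
  have h1x : (1:ℝ) ≤ 1 + |x| := by simp [abs_nonneg]
  have he : hermiteEval m x
      = ∑ i ∈ Finset.range (m + 1), ((Polynomial.hermite m).coeff i : ℝ) * x ^ i := by
    unfold hermiteEval
    rw [Polynomial.aeval_eq_sum_range' (n := m + 1) (by rw [Polynomial.natDegree_hermite]; omega)]
    simp [zsmul_eq_mul]
  rw [he, Finset.sum_mul]
  refine (Finset.abs_sum_le_sum_abs _ _).trans (Finset.sum_le_sum fun i hi => ?_)
  rw [abs_mul, abs_pow]
  refine mul_le_mul_of_nonneg_left ?_ (abs_nonneg _)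
  calc |x| ^ i ≤ (1 + |x|) ^ i := pow_le_pow_left₀ (abs_nonneg x) (by linarith) i
    _ ≤ (1 + |x|) ^ m := pow_le_pow_right₀ h1x (by simpa using Finset.mem_range_succ_iff.mp hi)

lemma one_add_abs_le_exp (x : ℝ) : 1 + |x| ≤ Real.exp |x| := by
  have := Real.add_one_le_exp |x|
  linarith

lemma exp_abs_gauss_le (c : ℝ) (u : ℝ) :
    Real.exp (c * |u|) * Real.exp (-u ^ 2 / 2) ≤ Real.exp (c ^ 2) * Real.exp (-(1/4) * u ^ 2) := by
  rw [← Real.exp_add, ← Real.exp_add]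
  apply Real.exp_le_exp.mpr
  nlinarith [sq_nonneg (c - |u| / 2), sq_abs u]

lemma integrable_exp_abs_mul_stdPhi (c : ℝ) :
    Integrable (fun u : ℝ => Real.exp (c * |u|) * stdPhi u) := by
  have hint : Integrable (fun u : ℝ =>
      (Real.sqrt (2 * Real.pi))⁻¹ * (Real.exp (c ^ 2) * Real.exp (-(1/4) * u ^ 2))) :=
    (((integrable_exp_neg_mul_sq (by norm_num : (0:ℝ) < 1/4)).const_mul _).const_mul _)
  refine hint.mono' ?_ ?_
  · exact ((Real.continuous_exp.comp (continuous_const.mul continuous_abs)).mul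
      continuous_stdPhi).aestronglyMeasurable
  · refine Filter.Eventually.of_forall fun u => ?_
    have h0 : 0 ≤ Real.exp (c * |u|) * stdPhi u :=
      mul_nonneg (Real.exp_pos _).le (stdPhi_pos u).le
    rw [Real.norm_eq_abs, abs_of_nonneg h0]
    unfold stdPhi
    have := exp_abs_gauss_le c u
    have hc : 0 ≤ (Real.sqrt (2 * Real.pi))⁻¹ := by positivity
    calc Real.exp (c * |u|) * ((Real.sqrt (2 * Real.pi))⁻¹ * Real.exp (-u ^ 2 / 2))
        = (Real.sqrt (2 * Real.pi))⁻¹ * (Real.exp (c * |u|) * Real.exp (-u ^ 2 / 2)) := by ring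
      _ ≤ (Real.sqrt (2 * Real.pi))⁻¹ * (Real.exp (c ^ 2) * Real.exp (-(1/4) * u ^ 2)) :=
          mul_le_mul_of_nonneg_left this hc

noncomputable def boundFn (G : ℝ → ℝ) (K c : ℝ) (u : ℝ) : ℝ :=
  (G u ^ 2 * stdPhi u + K ^ 2 * Real.exp (2 * c * |u|) * stdPhi u) / 2

lemma boundFn_integrable (G : ℝ → ℝ) (hL2 : Integrable fun z => G z ^ 2 * stdPhi z) (K c : ℝ) :
    Integrable (boundFn G K c) := by
  unfold boundFn
  have h2 : Integrable (fun u : ℝ => K ^ 2 * Real.exp (2 * c * |u|) * stdPhi u) := by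
    simpa [mul_assoc] using (integrable_exp_abs_mul_stdPhi (2 * c)).const_mul (K ^ 2)
  exact (hL2.add h2).div_const 2

lemma le_boundFn (G : ℝ → ℝ) (K c : ℝ) (u : ℝ) :
    |G u| * (K * Real.exp (c * |u|) * stdPhi u) ≤ boundFn G K c u := by
  have hφ := (stdPhi_pos u).le
  have hs : Real.sqrt (stdPhi u) * Real.sqrt (stdPhi u) = stdPhi u := Real.mul_self_sqrt hφ
  set a := |G u| * Real.sqrt (stdPhi u) with ha
  set b := K * Real.exp (c * |u|) * Real.sqrt (stdPhi u) with hb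
  have hab : |G u| * (K * Real.exp (c * |u|) * stdPhi u) ≤ a * b := by
    rw [ha, hb]; rw [show |G u| * Real.sqrt (stdPhi u) * (K * Real.exp (c * |u|) * Real.sqrt (stdPhi u))
      = |G u| * (K * Real.exp (c * |u|) * (Real.sqrt (stdPhi u) * Real.sqrt (stdPhi u))) from by ring,
      hs]
  have ha2 : a ^ 2 = G u ^ 2 * stdPhi u := by
    rw [ha, mul_pow, sq_abs, Real.sq_sqrt hφ]
  have hexp2 : Real.exp (c * |u|) ^ 2 = Real.exp (2 * c * |u|) := by
    rw [pow_two, ← Real.exp_add]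
    congr 1
    ring
  have hb2 : b ^ 2 = K ^ 2 * Real.exp (2 * c * |u|) * stdPhi u := by
    rw [hb, mul_pow, mul_pow, Real.sq_sqrt hφ, hexp2]
  have key : a * b ≤ (a ^ 2 + b ^ 2) / 2 := by nlinarith [sq_nonneg (a - b)]
  unfold boundFn
  rw [← ha2, ← hb2]
  linarith

lemma stdPhi_shift_le {Y : ℝ} (y u : ℝ) (hy : |y| ≤ Y) :
    stdPhi (u - y) ≤ Real.exp (Y * |u|) * stdPhi u := by
  unfold stdPhi
  have huy : u * y ≤ |u| * Y := by
    calc u * y ≤ |u * y| := le_abs_self _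
      _ = |u| * |y| := abs_mul u y
      _ ≤ |u| * Y := mul_le_mul_of_nonneg_left hy (abs_nonneg u)
  have hexp : Real.exp (-(u - y) ^ 2 / 2) ≤ Real.exp (Y * |u|) * Real.exp (-u ^ 2 / 2) := by
    rw [← Real.exp_add]
    apply Real.exp_le_exp.mpr
    nlinarith [sq_nonneg y]
  have hc : 0 ≤ (Real.sqrt (2 * Real.pi))⁻¹ := by positivity
  calc (Real.sqrt (2 * Real.pi))⁻¹ * Real.exp (-(u - y) ^ 2 / 2)
      ≤ (Real.sqrt (2 * Real.pi))⁻¹ * (Real.exp (Y * |u|) * Real.exp (-u ^ 2 / 2)) :=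
        mul_le_mul_of_nonneg_left hexp hc
    _ = Real.exp (Y * |u|) * ((Real.sqrt (2 * Real.pi))⁻¹ * Real.exp (-u ^ 2 / 2)) := by ring

lemma abs_psiH_shift_le (m : ℕ) {Y : ℝ} (hY : 0 ≤ Y) :
    ∃ K, 0 ≤ K ∧ ∀ y u : ℝ, |y| ≤ Y →
      |psiH m (u - y)| ≤ K * Real.exp (((m : ℝ) + Y) * |u|) * stdPhi u := by
  obtain ⟨C, hC, hCb⟩ := hermiteEval_bound m
  refine ⟨C * (1 + Y) ^ m, by positivity, fun y u hy => ?_⟩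
  have hφ := (stdPhi_pos (u - y)).le
  have h1 : |psiH m (u - y)| = |hermiteEval m (u - y)| * stdPhi (u - y) := by
    rw [psiH, abs_mul, abs_of_nonneg hφ]
  have h2 : (1 + |u - y|) ≤ (1 + Y) * (1 + |u|) := by
    have := abs_sub u y
    have h3 : |u - y| ≤ |u| + Y := by
      calc |u - y| ≤ |u| + |y| := abs_sub _ _
        _ ≤ |u| + Y := by linarith
    nlinarith [abs_nonneg u]
  have h4 : |hermiteEval m (u - y)| ≤ C * ((1 + Y) ^ m * Real.exp ((m : ℝ) * |u|)) := by
    refine (hCb (u - y)).trans ?_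
    refine mul_le_mul_of_nonneg_left ?_ hC
    calc (1 + |u - y|) ^ m ≤ ((1 + Y) * (1 + |u|)) ^ m := by
          apply pow_le_pow_left₀ (by positivity) h2
      _ = (1 + Y) ^ m * (1 + |u|) ^ m := mul_pow _ _ _
      _ ≤ (1 + Y) ^ m * Real.exp ((m : ℝ) * |u|) := by
          refine mul_le_mul_of_nonneg_left ?_ (by positivity)
          calc (1 + |u|) ^ m ≤ Real.exp |u| ^ m :=
                pow_le_pow_left₀ (by positivity) (one_add_abs_le_exp u) m
            _ = Real.exp ((m : ℝ) * |u|) := by rw [← Real.exp_nat_mul]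
  calc |psiH m (u - y)| = |hermiteEval m (u - y)| * stdPhi (u - y) := h1
    _ ≤ (C * ((1 + Y) ^ m * Real.exp ((m : ℝ) * |u|))) * (Real.exp (Y * |u|) * stdPhi u) := by
        apply mul_le_mul h4 (stdPhi_shift_le y u hy) hφ (by positivity)
    _ = C * (1 + Y) ^ m * Real.exp (((m : ℝ) + Y) * |u|) * stdPhi u := by
        rw [show ((m : ℝ) + Y) * |u| = (m : ℝ) * |u| + Y * |u| from by ring, Real.exp_add]
        ring

noncomputable def Dfun (G : ℝ → ℝ) (m : ℕ) (y : ℝ) : ℝ := ∫ u : ℝ, G u * psiH m (u - y)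

lemma integrand_aesm (G : ℝ → ℝ) (hmeas : Measurable G) (m : ℕ) (y : ℝ) :
    AEStronglyMeasurable (fun u => G u * psiH m (u - y)) volume :=
  (hmeas.mul ((continuous_psiH m).measurable.comp
    (measurable_id.sub measurable_const))).aestronglyMeasurable

lemma abs_integrand_le (G : ℝ → ℝ) {m : ℕ} {Y K : ℝ} (hK : 0 ≤ K)
    (hKb : ∀ y u : ℝ, |y| ≤ Y →
      |psiH m (u - y)| ≤ K * Real.exp (((m : ℝ) + Y) * |u|) * stdPhi u)
    {y : ℝ} (hy : |y| ≤ Y) (u : ℝ) :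
    ‖G u * psiH m (u - y)‖ ≤ boundFn G K ((m : ℝ) + Y) u := by
  rw [Real.norm_eq_abs, abs_mul]
  calc |G u| * |psiH m (u - y)|
      ≤ |G u| * (K * Real.exp (((m : ℝ) + Y) * |u|) * stdPhi u) :=
        mul_le_mul_of_nonneg_left (hKb y u hy) (abs_nonneg _)
    _ ≤ boundFn G K ((m : ℝ) + Y) u := le_boundFn G K _ u

lemma integrand_integrable (G : ℝ → ℝ) (hmeas : Measurable G)
    (hL2 : Integrable fun z => G z ^ 2 * stdPhi z) (m : ℕ) (y : ℝ) :
    Integrable (fun u => G u * psiH m (u - y)) := by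
  obtain ⟨K, hK, hKb⟩ := abs_psiH_shift_le m (abs_nonneg y)
  refine (boundFn_integrable G hL2 K ((m : ℝ) + |y|)).mono' (integrand_aesm G hmeas m y) ?_
  exact Filter.Eventually.of_forall fun u => abs_integrand_le G hK hKb le_rfl u

lemma hasDerivAt_Dfun (G : ℝ → ℝ) (hmeas : Measurable G)
    (hL2 : Integrable fun z => G z ^ 2 * stdPhi z) (m : ℕ) (y₀ : ℝ) :
    HasDerivAt (Dfun G m) (Dfun G (m + 1) y₀) y₀ := by
  obtain ⟨K, hK, hKb⟩ := abs_psiH_shift_le (m + 1) (by positivity : (0:ℝ) ≤ |y₀| + 1)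
  have h := hasDerivAt_integral_of_dominated_loc_of_deriv_le (μ := volume)
    (F := fun y u => G u * psiH m (u - y)) (F' := fun y u => G u * psiH (m + 1) (u - y))
    (x₀ := y₀) (bound := boundFn G K (((m : ℝ) + 1) + (|y₀| + 1))) (s := Metric.ball y₀ 1) (Metric.ball_mem_nhds y₀ one_pos)
    (Filter.Eventually.of_forall fun y => integrand_aesm G hmeas m y)
    (integrand_integrable G hmeas hL2 m y₀)
    (integrand_aesm G hmeas (m + 1) y₀)
    ?_ (boundFn_integrable G hL2 K _) ?_
  · exact h.2
  · refine Filter.Eventually.of_forall fun u y hy => ?_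
    have hyY : |y| ≤ |y₀| + 1 := by
      have := Metric.mem_ball.mp hy
      rw [Real.dist_eq] at this
      calc |y| = |(y - y₀) + y₀| := by ring_nf
        _ ≤ |y - y₀| + |y₀| := abs_add_le _ _
        _ ≤ |y₀| + 1 := by linarith
    have := abs_integrand_le G hK hKb hyY u
    simpa [Nat.cast_add, Nat.cast_one] using this
  · refine Filter.Eventually.of_forall fun u y _ => ?_
    have hc : HasDerivAt (fun y : ℝ => u - y) (-1) y := by
      simpa using (hasDerivAt_id y).const_sub u
    have h2 := ((hasDerivAt_psiH m (u - y)).comp y hc).const_mul (G u)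
    simpa using h2

noncomputable def cKer (w : ℂ) (u : ℝ) : ℂ :=
  ((Real.sqrt (2 * Real.pi) : ℝ) : ℂ)⁻¹ * Complex.exp (-((u : ℂ) - w) ^ 2 / 2)

lemma sqrt2pi_pos : 0 < Real.sqrt (2 * Real.pi) := Real.sqrt_pos.mpr (by positivity)

lemma norm_cKer (w : ℂ) (u : ℝ) :
    ‖cKer w u‖ = (Real.sqrt (2 * Real.pi))⁻¹ * Real.exp ((-(u - w.re) ^ 2 + w.im ^ 2) / 2) := by
  have hre : (-((u : ℂ) - w) ^ 2 / 2).re = (-(u - w.re) ^ 2 + w.im ^ 2) / 2 := by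
    simp [Complex.div_re, Complex.normSq, pow_two, Complex.mul_re, Complex.sub_re, Complex.sub_im]
    ring
  rw [cKer, norm_mul, Complex.norm_exp, hre]
  congr 1
  rw [norm_inv, Complex.norm_real, Real.norm_eq_abs, abs_of_pos sqrt2pi_pos]

lemma norm_cKer_le {Y : ℝ} (hY : 0 ≤ Y) {w : ℂ} (hw : ‖w‖ ≤ Y) (u : ℝ) :
    ‖cKer w u‖ ≤ Real.exp (Y ^ 2 / 2) * Real.exp (Y * |u|) * stdPhi u := by
  rw [norm_cKer]
  have ha : |w.re| ≤ Y := (Complex.abs_re_le_norm w).trans hw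
  have hb : |w.im| ≤ Y := (Complex.abs_im_le_norm w).trans hw
  have h1 : Real.exp ((-(u - w.re) ^ 2 + w.im ^ 2) / 2)
      ≤ Real.exp (Y ^ 2 / 2 + Y * |u|) * Real.exp (-u ^ 2 / 2) := by
    rw [← Real.exp_add]
    apply Real.exp_le_exp.mpr
    have h2 : u * w.re ≤ |u| * Y := by
      calc u * w.re ≤ |u * w.re| := le_abs_self _
        _ = |u| * |w.re| := abs_mul _ _
        _ ≤ |u| * Y := mul_le_mul_of_nonneg_left ha (abs_nonneg u)
    have h3 : w.im ^ 2 ≤ Y ^ 2 := by nlinarith [sq_abs w.im, abs_nonneg w.im]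
    nlinarith [sq_nonneg w.re]
  calc (Real.sqrt (2 * Real.pi))⁻¹ * Real.exp ((-(u - w.re) ^ 2 + w.im ^ 2) / 2)
      ≤ (Real.sqrt (2 * Real.pi))⁻¹ * (Real.exp (Y ^ 2 / 2 + Y * |u|) * Real.exp (-u ^ 2 / 2)) :=
        mul_le_mul_of_nonneg_left h1 (by positivity)
    _ = Real.exp (Y ^ 2 / 2) * Real.exp (Y * |u|) * stdPhi u := by
        rw [Real.exp_add, stdPhi]; ring

noncomputable def cInt (G : ℝ → ℝ) (w : ℂ) : ℂ := ∫ u : ℝ, (G u : ℂ) * cKer w u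

lemma continuous_cKer (w : ℂ) : Continuous (fun u : ℝ => cKer w u) := by
  unfold cKer; fun_prop

lemma cInt_aesm (G : ℝ → ℝ) (hmeas : Measurable G) (w : ℂ) :
    AEStronglyMeasurable (fun u : ℝ => (G u : ℂ) * cKer w u) volume :=
  ((Complex.measurable_ofReal.comp hmeas).mul (continuous_cKer w).measurable).aestronglyMeasurable

lemma cInt_integrand_le (G : ℝ → ℝ) {Y : ℝ} (hY : 0 ≤ Y) {w : ℂ} (hw : ‖w‖ ≤ Y) (u : ℝ) :
    ‖(G u : ℂ) * cKer w u‖ ≤ boundFn G (Real.exp (Y ^ 2 / 2)) Y u := by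
  rw [norm_mul, Complex.norm_real, Real.norm_eq_abs]
  refine le_trans ?_ (le_boundFn G _ Y u)
  exact mul_le_mul_of_nonneg_left (norm_cKer_le hY hw u) (abs_nonneg _)

lemma cInt_integrable (G : ℝ → ℝ) (hmeas : Measurable G)
    (hL2 : Integrable fun z => G z ^ 2 * stdPhi z) (w : ℂ) :
    Integrable (fun u : ℝ => (G u : ℂ) * cKer w u) := by
  refine (boundFn_integrable G hL2 (Real.exp (‖w‖ ^ 2 / 2)) ‖w‖).mono' (cInt_aesm G hmeas w) ?_
  exact Filter.Eventually.of_forall fun u => cInt_integrand_le G (norm_nonneg w) le_rfl u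

lemma hasDerivAt_cKer (w : ℂ) (u : ℝ) :
    HasDerivAt (fun w => cKer w u) (cKer w u * ((u : ℂ) - w)) w := by
  have hc : HasDerivAt (fun w : ℂ => (u : ℂ) - w) (-1) w := by
    simpa using (hasDerivAt_id w).const_sub (u : ℂ)
  have hsq : HasDerivAt (fun z : ℂ => -z ^ 2 / 2) (-((u : ℂ) - w)) ((u : ℂ) - w) := by
    have := ((hasDerivAt_pow 2 ((u : ℂ) - w)).neg).div_const 2
    refine this.congr_deriv ?_
    ring
  have hexp := ((hsq.comp w hc).cexp).const_mul (((Real.sqrt (2 * Real.pi) : ℝ) : ℂ)⁻¹)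
  have key : HasDerivAt (fun w => cKer w u)
      ((((Real.sqrt (2 * Real.pi) : ℝ) : ℂ))⁻¹ *
        (Complex.exp (-((u : ℂ) - w) ^ 2 / 2) * (-((u : ℂ) - w) * -1))) w := hexp
  convert key using 1
  rw [cKer]
  ring

lemma hasDerivAt_cInt (G : ℝ → ℝ) (hmeas : Measurable G)
    (hL2 : Integrable fun z => G z ^ 2 * stdPhi z) (w₀ : ℂ) :
    HasDerivAt (cInt G) (∫ u : ℝ, (G u : ℂ) * (cKer w₀ u * ((u : ℂ) - w₀))) w₀ := by
  set Y := ‖w₀‖ + 1 with hYdef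
  have hY : 0 ≤ Y := by positivity
  have h := hasDerivAt_integral_of_dominated_loc_of_deriv_le (μ := volume)
    (F := fun w u => (G u : ℂ) * cKer w u)
    (F' := fun w u => (G u : ℂ) * (cKer w u * ((u : ℂ) - w)))
    (x₀ := w₀) (bound := boundFn G (Real.exp (Y ^ 2 / 2) * (1 + Y)) (Y + 1)) (s := Metric.ball w₀ 1) (Metric.ball_mem_nhds w₀ one_pos)
    (Filter.Eventually.of_forall fun w => cInt_aesm G hmeas w)
    (cInt_integrable G hmeas hL2 w₀)
    ?_ ?_ (boundFn_integrable G hL2 _ _) ?_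
  · exact h.2
  · exact ((Complex.measurable_ofReal.comp hmeas).mul
      ((continuous_cKer w₀).measurable.mul (by fun_prop))).aestronglyMeasurable
  · refine Filter.Eventually.of_forall fun u w hw => ?_
    have hwY : ‖w‖ ≤ Y := by
      have := Metric.mem_ball.mp hw
      rw [dist_eq_norm] at this
      calc ‖w‖ = ‖(w - w₀) + w₀‖ := by ring_nf
        _ ≤ ‖w - w₀‖ + ‖w₀‖ := norm_add_le _ _
        _ ≤ Y := by rw [hYdef]; linarith
    rw [norm_mul, Complex.norm_real, Real.norm_eq_abs, norm_mul]
    have h1 : ‖(u : ℂ) - w‖ ≤ (1 + Y) * Real.exp |u| := by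
      calc ‖(u : ℂ) - w‖ ≤ ‖(u : ℂ)‖ + ‖w‖ := norm_sub_le _ _
        _ ≤ |u| + Y := by rw [Complex.norm_real, Real.norm_eq_abs]; linarith
        _ ≤ (1 + Y) * (1 + |u|) := by nlinarith [abs_nonneg u]
        _ ≤ (1 + Y) * Real.exp |u| :=
            mul_le_mul_of_nonneg_left (one_add_abs_le_exp u) (by positivity)
    refine le_trans ?_ (le_boundFn G _ (Y + 1) u)
    have h2 : ‖cKer w u‖ * ‖(u : ℂ) - w‖
        ≤ (Real.exp (Y ^ 2 / 2) * Real.exp (Y * |u|) * stdPhi u) * ((1 + Y) * Real.exp |u|) :=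
      mul_le_mul (norm_cKer_le hY hwY u) h1 (norm_nonneg _)
        (mul_nonneg (by positivity) (stdPhi_pos u).le)
    refine le_trans (mul_le_mul_of_nonneg_left h2 (abs_nonneg _)) ?_
    apply le_of_eq
    rw [show (Y + 1) * |u| = Y * |u| + |u| from by ring, Real.exp_add]
    ring
  · exact Filter.Eventually.of_forall fun u w _ =>
      ((hasDerivAt_cKer w u).const_mul ((G u : ℂ)))

variable (G : ℝ → ℝ) (hmeas : Measurable G) (hL2 : Integrable fun z => G z ^ 2 * stdPhi z)

lemma psiH_zero (x : ℝ) : psiH 0 x = stdPhi x := by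
  simp [psiH, hermiteEval, Polynomial.hermite_zero]

include hmeas hL2 in
lemma deriv_Dfun (m : ℕ) : deriv (Dfun G m) = Dfun G (m + 1) :=
  funext fun y => (hasDerivAt_Dfun G hmeas hL2 m y).deriv

include hmeas hL2 in
lemma iteratedDeriv_Dfun (n m : ℕ) : iteratedDeriv n (Dfun G m) = Dfun G (n + m) := by
  induction n generalizing m with
  | zero => simp
  | succ n ih =>
    rw [iteratedDeriv_succ', deriv_Dfun G hmeas hL2, ih]
    have : n + (m + 1) = n + 1 + m := by omega
    rw [this]

lemma funG_eq_Dfun : (fun y : ℝ => ∫ z : ℝ, G (z + y) * stdPhi z) = Dfun G 0 := by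
  funext y
  have h : ∀ z : ℝ, G (z + y) * stdPhi z = (fun u => G u * psiH 0 (u - y)) (z + y) := by
    intro z
    simp [psiH_zero]
  calc (∫ z : ℝ, G (z + y) * stdPhi z) = ∫ z : ℝ, (fun u => G u * psiH 0 (u - y)) (z + y) := by
        simp_rw [h]
    _ = ∫ u : ℝ, G u * psiH 0 (u - y) :=
          integral_add_right_eq_self (μ := volume) (fun u => G u * psiH 0 (u - y)) y
    _ = Dfun G 0 y := rfl

lemma Dfun_at_zero (m : ℕ) : Dfun G m 0 = ∫ z : ℝ, G z * hermiteEval m z * stdPhi z := by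
  unfold Dfun
  simp_rw [sub_zero, psiH, ← mul_assoc]

lemma cKer_real (x u : ℝ) : cKer (x : ℂ) u = ((stdPhi (u - x) : ℝ) : ℂ) := by
  rw [cKer, stdPhi]
  rw [show -((u : ℂ) - (x : ℂ)) ^ 2 / 2 = (((-(u - x) ^ 2 / 2 : ℝ)) : ℂ) from by push_cast; ring]
  rw [← Complex.ofReal_exp]
  push_cast
  ring

include hmeas hL2 in
lemma cInt_real (x : ℝ) : cInt G (x : ℂ) = ((Dfun G 0 x : ℝ) : ℂ) := by
  rw [cInt]
  have h : ∀ u : ℝ, (G u : ℂ) * cKer (x : ℂ) u = ((G u * psiH 0 (u - x) : ℝ) : ℂ) := by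
    intro u
    rw [cKer_real, psiH_zero]
    push_cast
    ring
  simp_rw [h]
  rw [Dfun]
  exact integral_ofReal

include hmeas hL2 in
lemma analyticOnNhd_cInt : AnalyticOnNhd ℂ (cInt G) Set.univ := by
  intro w _
  have hdiff : Differentiable ℂ (cInt G) := fun w₀ =>
    (hasDerivAt_cInt G hmeas hL2 w₀).differentiableAt
  exact hdiff.analyticAt w

include hmeas hL2 in
lemma contDiff_Dfun_zero : ContDiff ℝ (⊤ : ℕ∞) (Dfun G 0) := by
  have h1 : AnalyticOnNhd ℝ (cInt G) Set.univ :=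
    (analyticOnNhd_cInt G hmeas hL2).restrictScalars
  have h2 : AnalyticOnNhd ℝ (fun x : ℝ => (x : ℂ)) Set.univ :=
    fun x _ => Complex.ofRealCLM.analyticAt x
  have h3 : AnalyticOnNhd ℝ (fun x : ℝ => cInt G (x : ℂ)) Set.univ :=
    h1.comp h2 (Set.mapsTo_univ _ _)
  have h4 : AnalyticOnNhd ℝ (fun x : ℝ => (cInt G (x : ℂ)).re) Set.univ :=
    fun x _ => (Complex.reCLM.analyticAt _).comp (h3 x trivial)
  have h5 : (fun x : ℝ => (cInt G (x : ℂ)).re) = Dfun G 0 := by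
    funext x
    rw [cInt_real G hmeas hL2, Complex.ofReal_re]
  rw [← h5]
  exact h4.contDiff

/-- Coincidence of power rank and Hermite rank: if `G ∈ L²(γ)` has Hermite rank `k`,
then `G_∞(x) = E[G(Z+x)]` is smooth, its derivatives of orders `1,…,k−1` vanish at `0`,
and its `k`-th derivative at `0` is nonzero. -/
theorem power_rank_eq_hermite_rank
    (G : ℝ → ℝ) (hmeas : Measurable G)
    (hL2 : Integrable (fun z => (G z) ^ 2 * stdPhi z))
    (k : ℕ) (hk1 : 1 ≤ k)
    (hrank : ∫ z : ℝ, G z * hermiteEval k z * stdPhi z ≠ 0)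
    (hmin : ∀ m : ℕ, 1 ≤ m → m < k → ∫ z : ℝ, G z * hermiteEval m z * stdPhi z = 0) :
    ContDiff ℝ (⊤ : ℕ∞) (fun y : ℝ => ∫ z : ℝ, G (z + y) * stdPhi z) ∧
    iteratedDeriv k (fun y : ℝ => ∫ z : ℝ, G (z + y) * stdPhi z) 0 ≠ 0 ∧
    (∀ m : ℕ, 1 ≤ m → m < k →
      iteratedDeriv m (fun y : ℝ => ∫ z : ℝ, G (z + y) * stdPhi z) 0 = 0) := by
  rw [funG_eq_Dfun G]
  refine ⟨contDiff_Dfun_zero G hmeas hL2, ?_, ?_⟩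
  · rw [iteratedDeriv_Dfun G hmeas hL2 k 0, Dfun_at_zero]
    simpa using hrank
  · intro m h1 h2
    rw [iteratedDeriv_Dfun G hmeas hL2 m 0, Dfun_at_zero]
    simpa using hmin m h1 h2
end
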